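/- arXiv:1107.6028 — 2 statements merged into one kernel-verified Lean document; each statement's English description precedes it below -/
import Mathlib

section
/- Let Σ be a closed orientable surface and Γ ⊂ Σ a 1-submanifold such that Σ \ Γ has exactly two connected components. Let c ⊂ Σ \ Γ be a simple closed curve that does not separate Σ. Then c is nonisolating: every connected component of Σ \ (Γ ∪ c) has a boundary component intersecting Γ. -/
/-!
If the closure of a component `U` of `Σ \ (Γ ∪ c)` missed `Γ`, then every limit point of `U`
outside `c` would lie in `Σ \ (Γ ∪ c)`, hence in `U` itself. Since `Σ` is locally connected, `U`
is open, so `U` would be clopen in the connected set `Σ \ c`, forcing `Σ \ c ⊆ U`. But `Σ \ c`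
contains the nonempty set `Γ`, which `U` avoids.
-/

open Set

section

variable {X : Type*} [TopologicalSpace X]

theorem closure_connectedComponentIn_inter_subset (F : Set X) (x : X) :
    closure (connectedComponentIn F x) ∩ F ⊆ connectedComponentIn F x := by
  by_cases hx : x ∈ F
  · have hpre : IsPreconnected (closure (connectedComponentIn F x) ∩ F) :=
      isPreconnected_connectedComponentIn.subset_closure
        (subset_inter subset_closure (connectedComponentIn_subset F x)) inter_subset_left
    exact hpre.subset_connectedComponentIn
      ⟨subset_closure (mem_connectedComponentIn hx), hx⟩ inter_subset_right
  · simp [connectedComponentIn_eq_empty hx]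

theorem compl_subset_connectedComponentIn_of_disjoint_closure [LocallyConnectedSpace X]
    {A B : Set X} (hA : IsClosed A) (hB : IsClosed B) (hBc : IsPreconnected Bᶜ)
    {x : X} (hx : x ∈ (A ∪ B)ᶜ)
    (hdisj : Disjoint (closure (connectedComponentIn (A ∪ B)ᶜ x)) A) :
    Bᶜ ⊆ connectedComponentIn (A ∪ B)ᶜ x := by
  refine hBc.subset_of_closure_inter_subset (hA.union hB).isOpen_compl.connectedComponentIn
    ⟨x, fun hxB => hx (Or.inr hxB), mem_connectedComponentIn hx⟩ ?_
  rintro y ⟨hyU, hyB⟩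
  refine closure_connectedComponentIn_inter_subset _ _ ⟨hyU, ?_⟩
  rintro (hyA | hyB')
  exacts [hdisj.notMem_of_mem_left hyU hyA, hyB hyB']

end

theorem nonseparating_curve_is_nonisolating_general
    {S : Type*} [TopologicalSpace S]
    [ChartedSpace (EuclideanSpace ℝ (Fin 2)) S]
    (Γ c : Set S) (hΓc : IsClosed Γ) (hcc : IsClosed c)
    (hΓne : Γ.Nonempty)
    (hcΓ : c ⊆ Γᶜ)
    (hnonsep : IsConnected (cᶜ : Set S)) :
    ∀ x ∈ (Γ ∪ c)ᶜ, (closure (connectedComponentIn (Γ ∪ c)ᶜ x) ∩ Γ).Nonempty := by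
  have := ChartedSpace.locallyConnectedSpace (EuclideanSpace ℝ (Fin 2)) S
  intro x hx
  by_contra hempty
  rw [← not_disjoint_iff_nonempty_inter, not_not] at hempty
  obtain ⟨g, hgΓ⟩ := hΓne
  have hgc : g ∈ cᶜ := fun hgc => hcΓ hgc hgΓ
  have hcompl := compl_subset_connectedComponentIn_of_disjoint_closure hΓc hcc
    hnonsep.isPreconnected hx hempty
  exact connectedComponentIn_subset _ _ (hcompl hgc) (Or.inl hgΓ)

/-- Nonisolating curves: let `Σ` be a closed orientable surface (a compact topological
2-manifold), `Γ ⊂ Σ` a closed 1-submanifold whose complement has exactly two connected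
components, and `c ⊂ Σ \ Γ` a simple closed curve (a connected closed subset) which does
not separate `Σ` (its complement is connected). Then `c` is nonisolating: every connected
component of `Σ \ (Γ ∪ c)` has closure meeting `Γ`. -/
theorem nonseparating_curve_is_nonisolating
    {S : Type*} [TopologicalSpace S] [CompactSpace S] [T2Space S] [ConnectedSpace S]
    [ChartedSpace (EuclideanSpace ℝ (Fin 2)) S]
    (Γ c : Set S) (hΓc : IsClosed Γ) (hcc : IsClosed c)
    (hΓne : Γ.Nonempty)
    (hcΓ : c ⊆ Γᶜ) (hconn : IsConnected c)
    (htwo : Nat.card (ConnectedComponents ↥(Γᶜ)) = 2)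
    (hnonsep : IsConnected (cᶜ : Set S)) :
    ∀ x ∈ (Γ ∪ c)ᶜ, (closure (connectedComponentIn (Γ ∪ c)ᶜ x) ∩ Γ).Nonempty :=
  nonseparating_curve_is_nonisolating_general Γ c hΓc hcc hΓne hcΓ hnonsep
end

section
/- Abstract version of Lemma 5.2: let (V, s_f)_{f ∈ ℤ} be a family of modules V_f with maps s_f : V → V_f, such that for each f there are exact triangles V →^{s_f} V_f →^{F₂} V_{f+1} →^{F₃} V and V →^{s_{f+1}} V_{f+1} → V_{f+2} →^{G₃} V, with s_{f+1} ∘ F₃ = 0 and F₃ ∘ s_{f+1} = 0. Then: (1) if s_{f+1} is injective or surjective, s_f is injective; (2) if s_f is surjective or zero, s_{f+1} is zero. -/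
/-! Exactness turns the vanishing of a map of a triangle into injectivity or surjectivity of
its neighbours, and an injective or surjective factor can be cancelled from the composition
identities. So either hypothesis of (1) forces `F₃ f = 0`, whence `s f` is injective; in (2),
`s f` surjective makes `F₃ f` injective (through `F₂ f = 0`) and `s f = 0` makes `F₃ f`
surjective, and cancelling `F₃ f` gives `s (f+1) = 0`. -/

namespace LinearMap

variable {R M N P : Type*} [Semiring R] [AddCommMonoid M] [AddCommMonoid N] [AddCommMonoid P]
  [Module R M] [Module R N] [Module R P] {g : N →ₗ[R] P} {h : M →ₗ[R] N}

theorem eq_zero_of_injective_of_comp_eq_zero (hg : Function.Injective g) (hgh : g ∘ₗ h = 0) :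
    h = 0 :=
  (cancel_left hg).mp (hgh.trans (comp_zero g).symm)

theorem eq_zero_of_surjective_of_comp_eq_zero (hh : Function.Surjective h) (hgh : g ∘ₗ h = 0) :
    g = 0 :=
  (cancel_right hh).mp (hgh.trans (zero_comp h).symm)

end LinearMap

open LinearMap in
/-- Abstract version of Lemma 5.2 (surgery maps). Given a family of modules `W f`
(`f ∈ ℤ`) and maps `s f : V → W f` fitting for each `f` into an exact triangle
`V → W f → W (f+1) → V` (with maps `F₂ f` and `F₃ f`), such that
`s (f+1) ∘ F₃ f = 0` and `F₃ f ∘ s (f+1) = 0`, then: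
(1) if `s (f+1)` is injective or surjective, then `s f` is injective;
(2) if `s f` is surjective or zero, then `s (f+1) = 0`. -/
theorem surgery_maps_lemma
    {R : Type*} [CommRing R]
    {V : Type*} [AddCommGroup V] [Module R V]
    {W : ℤ → Type*} [∀ f, AddCommGroup (W f)] [∀ f, Module R (W f)]
    (s : ∀ f : ℤ, V →ₗ[R] W f)
    (F₂ : ∀ f : ℤ, W f →ₗ[R] W (f + 1))
    (F₃ : ∀ f : ℤ, W (f + 1) →ₗ[R] V)
    (hex₁ : ∀ f, LinearMap.range (s f) = LinearMap.ker (F₂ f))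
    (hex₂ : ∀ f, LinearMap.range (F₂ f) = LinearMap.ker (F₃ f))
    (hex₃ : ∀ f, LinearMap.range (F₃ f) = LinearMap.ker (s f))
    (hcomp₁ : ∀ f, (s (f + 1)) ∘ₗ (F₃ f) = 0)
    (hcomp₂ : ∀ f, (F₃ f) ∘ₗ (s (f + 1)) = 0)
    (f : ℤ) :
    ((Function.Injective (s (f + 1)) ∨ Function.Surjective (s (f + 1))) →
      Function.Injective (s f)) ∧
    ((Function.Surjective (s f) ∨ s f = 0) → s (f + 1) = 0) := by
  have exact₁ : Function.Exact (s f) (F₂ f) := exact_iff.mpr (hex₁ f).symm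
  have exact₂ : Function.Exact (F₂ f) (F₃ f) := exact_iff.mpr (hex₂ f).symm
  have exact₃ : Function.Exact (F₃ f) (s f) := exact_iff.mpr (hex₃ f).symm
  constructor
  · rintro (hinj | hsurj)
    all_goals rw [injective_iff_eq_zero_of_exact exact₃]
    · exact eq_zero_of_injective_of_comp_eq_zero hinj (hcomp₁ f)
    · exact eq_zero_of_surjective_of_comp_eq_zero hsurj (hcomp₂ f)
  · rintro (hsurj | hzero)
    · have hF₂ : F₂ f = 0 := (surjective_iff_eq_zero_of_exact exact₁).mp hsurj
      have hF₃ : Function.Injective (F₃ f) := (injective_iff_eq_zero_of_exact exact₂).mpr hF₂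
      exact eq_zero_of_injective_of_comp_eq_zero hF₃ (hcomp₂ f)
    · have hF₃ : Function.Surjective (F₃ f) := (surjective_iff_eq_zero_of_exact exact₃).mpr hzero
      exact eq_zero_of_surjective_of_comp_eq_zero hF₃ (hcomp₁ f)
end
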